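/- arXiv:1107.0088 — 4 statements merged into one kernel-verified Lean document; each statement's English description precedes it below -/
import Mathlib

section
/- Let A be a symmetric n×n real matrix and let X be a nonzero symmetric positive semidefinite n×n real matrix. Let u ∈ ℝ and δ_U > 0, and suppose λ_max(A) < u. Set u' := u + δ_U and M := u'·I − A, and define U_A(X) := ⟨M^{−2}, X⟩ / (Φ^u(A) − Φ^{u'}(A)) + ⟨M^{−1}, X⟩. If α > 0 satisfies 1/α ≥ U_A(X), then λ_max(A + α·X) < u' and Φ^{u'}(A + α·X) ≤ Φ^u(A). -/
/-!
Normalise by `S := M^{1/2}`: the matrix `B := S⁻¹ X S⁻¹` is positive semidefinite with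
`tr B = ⟨M⁻¹, X⟩ =: t`, so its spectrum lies in `[0, t]`; as `⟨M⁻², X⟩ > 0` and
`Φ^u(A) > Φ^{u'}(A)`, the hypothesis on `U_A(X)` forces `α t < 1`. By functional calculus `1 - αB` is then positive definite and
`(1 - αB)⁻¹ - 1 ≤ α / (1 - αt) • B`. Conjugating back, `M - αX = S (1 - αB) S` is positive
definite, and pairing the operator inequality with `M⁻¹` gives
`Φ^{u'}(A + αX) - Φ^{u'}(A) ≤ α / (1 - αt) · ⟨M⁻², X⟩`, which the hypothesis bounds by
`Φ^u(A) - Φ^{u'}(A)`.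
-/

open Matrix

/-- The upper potential `Φ^u(A) := tr((u·I − A)⁻¹)`. -/
noncomputable def upperPot {n : ℕ} (u : ℝ) (A : Matrix (Fin n) (Fin n) ℝ) : ℝ :=
  (u • (1 : Matrix (Fin n) (Fin n) ℝ) - A)⁻¹.trace

open scoped MatrixOrder ComplexOrder

namespace Matrix

variable {m : Type*} [Fintype m] [DecidableEq m]

section RCLike

variable {𝕜 : Type*} [RCLike 𝕜]

lemma PosSemidef.sqrt_mul_mul_sqrt {P Q : Matrix m m 𝕜} (hQ : Q.PosSemidef) :
    (CFC.sqrt P * Q * CFC.sqrt P).PosSemidef := by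
  simpa only [(CFC.sqrt_nonneg P).posSemidef.1.eq] using hQ.mul_mul_conjTranspose_same (CFC.sqrt P)

lemma PosSemidef.trace_mul_eq_trace_sqrt_mul_mul_sqrt {P : Matrix m m 𝕜} (hP : P.PosSemidef)
    (Q : Matrix m m 𝕜) : (P * Q).trace = (CFC.sqrt P * Q * CFC.sqrt P).trace := by
  rw [trace_mul_cycle, CFC.sqrt_mul_sqrt_self P hP.nonneg]

lemma PosSemidef.trace_mul_nonneg {P Q : Matrix m m 𝕜} (hP : P.PosSemidef) (hQ : Q.PosSemidef) :
    0 ≤ (P * Q).trace := by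
  rw [hP.trace_mul_eq_trace_sqrt_mul_mul_sqrt]
  exact hQ.sqrt_mul_mul_sqrt.trace_nonneg

lemma PosDef.trace_mul_pos {P Q : Matrix m m 𝕜} (hP : P.PosDef) (hQ : Q.PosSemidef)
    (hQ0 : Q ≠ 0) : 0 < (P * Q).trace := by
  have hS : IsUnit (CFC.sqrt P) := (CFC.isUnit_sqrt_iff P hP.posSemidef.nonneg).mpr hP.isUnit
  rw [hP.posSemidef.trace_mul_eq_trace_sqrt_mul_mul_sqrt]
  refine hQ.sqrt_mul_mul_sqrt.trace_nonneg.lt_of_ne' fun h => hQ0 ?_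
  rwa [hQ.sqrt_mul_mul_sqrt.trace_eq_zero_iff, hS.mul_left_eq_zero, hS.mul_right_eq_zero] at h

lemma PosSemidef.trace_mul_le_trace_mul {P K L : Matrix m m 𝕜} (hP : P.PosSemidef)
    (hKL : K ≤ L) : (P * K).trace ≤ (P * L).trace := by
  simpa only [Matrix.mul_sub, trace_sub, sub_nonneg] using hP.trace_mul_nonneg hKL

end RCLike

lemma PosSemidef.spectrum_subset_Icc_trace {B : Matrix m m ℝ} (hB : B.PosSemidef) :
    spectrum ℝ B ⊆ Set.Icc 0 B.trace := by
  rw [hB.1.spectrum_real_eq_range_eigenvalues, hB.1.trace_eq_sum_eigenvalues]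
  rintro _ ⟨i, rfl⟩
  exact ⟨hB.eigenvalues_nonneg i,
    Finset.single_le_sum (fun j _ => hB.eigenvalues_nonneg j) (Finset.mem_univ i)⟩

lemma PosSemidef.posDef_one_sub_smul_and_inv_sub_one_le {B : Matrix m m ℝ} (hB : B.PosSemidef)
    {α : ℝ} (hα : 0 ≤ α) (h : α * B.trace < 1) :
    (1 - α • B).PosDef ∧ (1 - α • B)⁻¹ - 1 ≤ (α / (1 - α * B.trace)) • B := by
  set s := 1 - α * B.trace
  have hs : 0 < s := sub_pos.mpr h
  have hsx : ∀ x ∈ spectrum ℝ B, s ≤ 1 - α * x := fun x hx =>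
    sub_le_sub_left (mul_le_mul_of_nonneg_left (hB.spectrum_subset_Icc_trace hx).2 hα) 1
  have hcont (f : ℝ → ℝ) : ContinuousOn f (spectrum ℝ B) := B.finite_real_spectrum.continuousOn f
  have hW : cfc (fun x : ℝ => 1 - α * x) B = 1 - α • B := by
    rw [cfc_sub .., cfc_const_one .., cfc_const_mul .., cfc_id' ..]
  have hWinv : cfc (fun x : ℝ => (1 - α * x)⁻¹) B = (1 - α • B)⁻¹ := by
    rw [cfc_inv _ _ (fun x hx => (hs.trans_le (hsx x hx)).ne'), hW, nonsing_inv_eq_ringInverse]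
  constructor
  · rw [← hW, ← isStrictlyPositive_iff_posDef, cfc_isStrictlyPositive_iff ..]
    exact fun x hx => hs.trans_le (hsx x hx)
  · have hV : cfc (fun x : ℝ => α / s * x) B = (α / s) • B := by
      rw [cfc_const_mul .., cfc_id' ..]
    rw [← hWinv, ← hV, ← cfc_one ℝ B, ← cfc_sub _ _ _ (hcont _) (hcont _)]
    refine cfc_mono (hf := hcont _) (hg := hcont _) fun x hx => ?_
    calc (1 - α * x)⁻¹ - 1 = α * x / (1 - α * x) := by
          field_simp [(hs.trans_le (hsx x hx)).ne']; ring
      _ ≤ α * x / s :=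
          div_le_div_of_nonneg_left (mul_nonneg hα (hB.spectrum_subset_Icc_trace hx).1) hs
            (hsx x hx)
      _ = α / s * x := by ring

theorem PosDef.posDef_sub_smul_and_trace_inv_le {M X : Matrix m m ℝ} (hM : M.PosDef)
    (hX : X.PosSemidef) {α : ℝ} (hα : 0 ≤ α) (h : α * (M⁻¹ * X).trace < 1) :
    (M - α • X).PosDef ∧ (M - α • X)⁻¹.trace ≤
      M⁻¹.trace + α / (1 - α * (M⁻¹ * X).trace) * (M⁻¹ * M⁻¹ * X).trace := by
  set S := CFC.sqrt M
  have hSH : Sᴴ = S := (CFC.sqrt_nonneg M).posSemidef.1.eq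
  have hSS : S * S = M := CFC.sqrt_mul_sqrt_self M hM.posSemidef.nonneg
  have hSu : IsUnit S := (CFC.isUnit_sqrt_iff M hM.posSemidef.nonneg).mpr hM.isUnit
  have hSdet : IsUnit S.det := (isUnit_iff_isUnit_det S).mp hSu
  have hMinv : M⁻¹ = S⁻¹ * S⁻¹ := by rw [← hSS, mul_inv_rev]
  set B := S⁻¹ * X * S⁻¹
  have hB : B.PosSemidef := by
    have := hX.mul_mul_conjTranspose_same S⁻¹
    rwa [conjTranspose_nonsing_inv, hSH] at this
  have htrB : B.trace = (M⁻¹ * X).trace := by rw [hMinv, trace_mul_cycle, Matrix.mul_assoc]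
  have htrMB : (M⁻¹ * B).trace = (M⁻¹ * M⁻¹ * X).trace := by
    rw [hMinv, show S⁻¹ * S⁻¹ * B = S⁻¹ * S⁻¹ * S⁻¹ * X * S⁻¹ by simp only [B, Matrix.mul_assoc],
      trace_mul_comm]
    simp only [Matrix.mul_assoc]
  obtain ⟨hW, hle⟩ := hB.posDef_one_sub_smul_and_inv_sub_one_le hα (htrB ▸ h)
  have hY : M - α • X = S * (1 - α • B) * S := by
    have hSBS : S * B * S = X := by
      simp only [B, ← Matrix.mul_assoc, mul_nonsing_inv S hSdet, Matrix.one_mul,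
        nonsing_inv_mul_cancel_right S X hSdet]
    rw [Matrix.mul_sub, Matrix.sub_mul, Matrix.mul_one, hSS, Matrix.mul_smul, Matrix.smul_mul, hSBS]
  refine ⟨?_, ?_⟩
  · rw [hY]
    have := hSu.posDef_star_right_conjugate_iff.mpr hW
    rwa [star_eq_conjTranspose, hSH] at this
  · have hYinv : (M - α • X)⁻¹ = S⁻¹ * (1 - α • B)⁻¹ * S⁻¹ := by
      rw [hY, mul_inv_rev, mul_inv_rev, Matrix.mul_assoc]
    have key := hM.inv.posSemidef.trace_mul_le_trace_mul hle
    rw [Matrix.mul_sub, trace_sub, Matrix.mul_one, Matrix.mul_smul, trace_smul, smul_eq_mul,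
      htrMB, htrB] at key
    rw [hYinv, trace_mul_cycle, ← hMinv]
    linarith

end Matrix

lemma upperPot_lt_upperPot {n : ℕ} [Nonempty (Fin n)] {A : Matrix (Fin n) (Fin n) ℝ} {u u' : ℝ}
    (hu : (u • (1 : Matrix (Fin n) (Fin n) ℝ) - A).PosDef) (huu' : u < u') :
    upperPot u' A < upperPot u A := by
  set N := u • (1 : Matrix (Fin n) (Fin n) ℝ) - A
  have hMN : u' • (1 : Matrix (Fin n) (Fin n) ℝ) - A = N + (u' - u) • 1 := by
    rw [sub_smul]; simp only [N]; abel
  have hM : (u' • (1 : Matrix (Fin n) (Fin n) ℝ) - A).PosDef := by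
    rw [hMN]; exact hu.add (PosDef.one.smul (sub_pos.mpr huu'))
  have hdiff : upperPot u A - upperPot u' A = (u' - u) * (N⁻¹ * (u' • 1 - A)⁻¹).trace := by
    rw [upperPot, upperPot, ← trace_sub, Matrix.inv_sub_inv (iff_of_true hu.isUnit hM.isUnit),
      hMN, add_sub_cancel_left, Matrix.mul_smul, Matrix.mul_one, Matrix.smul_mul, trace_smul,
      smul_eq_mul]
  have hpos := hu.inv.trace_mul_pos hM.inv.posSemidef
    fun h => hM.inv.trace_pos.ne' (by rw [h, trace_zero])
  rw [← sub_pos, hdiff]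
  exact mul_pos (sub_pos.mpr huu') hpos

lemma mul_lt_one_and_div_mul_le_of_div_add_le {α Δ c t : ℝ} (hα : 0 < α) (hΔ : 0 < Δ)
    (hc : 0 < c) (h : c / Δ + t ≤ 1 / α) : α * t < 1 ∧ α / (1 - α * t) * c ≤ Δ := by
  have ht : α * t < 1 := by
    have : t < 1 / α := by linarith [div_pos hc hΔ]
    rwa [lt_div_iff₀ hα, mul_comm] at this
  refine ⟨ht, ?_⟩
  have hcΔ : c ≤ (1 / α - t) * Δ := by rw [← div_le_iff₀ hΔ]; linarith
  rw [div_mul_eq_mul_div, div_le_iff₀ (sub_pos.mpr ht)]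
  calc α * c ≤ α * ((1 / α - t) * Δ) := by gcongr
    _ = Δ * (1 - α * t) := by field_simp

/-- `λ_max(A) < u` is encoded as positive definiteness of `u·I − A`, and `λ_max(A + α X) < u'` as
positive definiteness of `u'·I − (A + α X)`. -/
theorem bss_upper_barrier_shift_general {n : ℕ}
    (A X : Matrix (Fin n) (Fin n) ℝ) (hX : X.PosSemidef) (hX0 : X ≠ 0)
    (u δU : ℝ) (hδU : 0 < δU)
    (hu : (u • (1 : Matrix (Fin n) (Fin n) ℝ) - A).PosDef)
    (M : Matrix (Fin n) (Fin n) ℝ)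
    (hM : M = (u + δU) • (1 : Matrix (Fin n) (Fin n) ℝ) - A)
    (α : ℝ) (hα : 0 < α)
    (hUA : 1 / α ≥
      (M⁻¹ * M⁻¹ * X).trace / (upperPot u A - upperPot (u + δU) A) + (M⁻¹ * X).trace) :
    ((u + δU) • (1 : Matrix (Fin n) (Fin n) ℝ) - (A + α • X)).PosDef ∧
    upperPot (u + δU) (A + α • X) ≤ upperPot u A := by
  have : Nonempty (Fin n) := by
    by_contra hn
    exact hX0 (Matrix.ext fun i => ((not_nonempty_iff.mp hn).false i).elim)
  have hMpd : M.PosDef := by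
    rw [hM, add_smul, add_sub_right_comm]
    exact hu.add (PosDef.one.smul hδU)
  have hM2 : (M⁻¹ * M⁻¹).PosDef := by
    rw [← sq]
    exact (hMpd.inv.posSemidef.pow 2).posDef_iff_isUnit.mpr (hMpd.inv.isUnit.pow 2)
  obtain ⟨ht, hbound⟩ := mul_lt_one_and_div_mul_le_of_div_add_le hα
    (sub_pos.mpr (upperPot_lt_upperPot hu (lt_add_of_pos_right u hδU)))
    (hM2.trace_mul_pos hX hX0) hUA
  obtain ⟨hpd, htr⟩ := hMpd.posDef_sub_smul_and_trace_inv_le hX hα.le ht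
  have hY : (u + δU) • (1 : Matrix (Fin n) (Fin n) ℝ) - (A + α • X) = M - α • X := by
    rw [hM, sub_sub]
  refine ⟨hY ▸ hpd, ?_⟩
  calc upperPot (u + δU) (A + α • X) = (M - α • X)⁻¹.trace := by rw [upperPot, hY]
    _ ≤ upperPot (u + δU) A + α / (1 - α * (M⁻¹ * X).trace) * (M⁻¹ * M⁻¹ * X).trace := by
      rw [upperPot, ← hM]; exact htr
    _ ≤ upperPot u A := by linarith

/-- **Analog of BSS Lemma 3.3 for arbitrary-rank updates.** Here the condition
`λ_max(A) < u` is expressed as positive definiteness of `u·I − A`, and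
`λ_max(A + α X) < u'` as positive definiteness of `u'·I − (A + α X)`. -/
theorem bss_upper_barrier_shift {n : ℕ}
    (A X : Matrix (Fin n) (Fin n) ℝ) (hA : A.IsSymm) (hX : X.PosSemidef) (hX0 : X ≠ 0)
    (u δU : ℝ) (hδU : 0 < δU)
    (hu : (u • (1 : Matrix (Fin n) (Fin n) ℝ) - A).PosDef)
    (M : Matrix (Fin n) (Fin n) ℝ)
    (hM : M = (u + δU) • (1 : Matrix (Fin n) (Fin n) ℝ) - A)
    (α : ℝ) (hα : 0 < α)
    (hUA : 1 / α ≥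
      (M⁻¹ * M⁻¹ * X).trace / (upperPot u A - upperPot (u + δU) A) + (M⁻¹ * X).trace) :
    ((u + δU) • (1 : Matrix (Fin n) (Fin n) ℝ) - (A + α • X)).PosDef ∧
    upperPot (u + δU) (A + α • X) ≤ upperPot u A :=
  bss_upper_barrier_shift_general A X hX hX0 u δU hδU hu M hM α hα hUA
end

section
/- Let n ≥ 2, let A be a symmetric n×n real matrix, and let X be a symmetric positive semidefinite n×n real matrix. Let ℓ ∈ ℝ and δ_L > 0, and suppose λ_min(A) > ℓ and Φ_ℓ(A) ≤ 1/δ_L. Set ℓ' := ℓ + δ_L and N := A − ℓ'·I; then N is positive definite. Define L_A(X) := ⟨N^{−2}, X⟩ / (Φ_{ℓ'}(A) − Φ_ℓ(A)) − ⟨N^{−1}, X⟩. If α > 0 satisfies 1/α ≤ L_A(X), then λ_min(A + α·X) > ℓ' and Φ_{ℓ'}(A + α·X) ≤ Φ_ℓ(A). -/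
/-!
Let `N = A - ℓ'•1`. The eigenvalues `μᵢ` of `A - ℓ•1` satisfy `∑ 1/μᵢ ≤ 1/δ_L`; since `n ≥ 2` and
every term is positive, each `1/μᵢ < 1/δ_L`, so `N` is positive definite.

For `B ≻ 0` and `X ⪰ 0` one has the Sherman–Morrison type bound
`tr (B + X)⁻¹ ≤ tr B⁻¹ - tr (B⁻¹ B⁻¹ X) / (1 + tr (B⁻¹ X))`: congruence by `B^{1/2}` reduces it to
`B = 1` with weight `K = B⁻¹`, and diagonalising `Y = V diag(d) Vᵀ` turns both sides into sums
weighted by `wᵢ = (Vᵀ K V)ᵢᵢ ≥ 0`, where it follows termwise from `dᵢ/(1 + dᵢ) ≥ dᵢ/(1 + ∑ d)`.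
Applied to `B = N` and `αX`, the hypothesis `1/α ≤ L_A(X)` says precisely that the subtracted term
is at least `Φ_{ℓ'}(A) - Φ_ℓ(A)`.
-/

open Matrix

/-- The lower potential `Φ_ℓ(A) := tr((A − ℓ·I)⁻¹)`. -/
noncomputable def lowerPot {n : ℕ} (ℓ : ℝ) (A : Matrix (Fin n) (Fin n) ℝ) : ℝ :=
  (A - ℓ • (1 : Matrix (Fin n) (Fin n) ℝ))⁻¹.trace

open scoped MatrixOrder

section OrderedField

variable {K : Type*} [Field K] [LinearOrder K] [IsStrictOrderedRing K]

lemma lt_of_sum_inv_le_inv {ι : Type*} [Fintype ι] [Nontrivial ι] {μ : ι → K}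
    (hμ : ∀ i, 0 < μ i) {δ : K} (hδ : 0 < δ) (h : ∑ i, (μ i)⁻¹ ≤ δ⁻¹) (i : ι) : δ < μ i := by
  obtain ⟨j, hji⟩ := exists_ne i
  have hi : (μ i)⁻¹ < ∑ k, (μ k)⁻¹ :=
    Finset.single_lt_sum hji (Finset.mem_univ i) (Finset.mem_univ j) (inv_pos.2 (hμ j))
      fun k _ _ => (inv_pos.2 (hμ k)).le
  exact (inv_lt_inv₀ (hμ i) hδ).1 (hi.trans_le h)

lemma sum_inv_one_add_mul_le {ι : Type*} [Fintype ι] {d w : ι → K}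
    (hd : ∀ i, 0 ≤ d i) (hw : ∀ i, 0 ≤ w i) :
    ∑ i, (1 + d i)⁻¹ * w i ≤ ∑ i, w i - (∑ i, d i * w i) / (1 + ∑ i, d i) := by
  rw [Finset.sum_div, le_sub_iff_add_le, ← Finset.sum_add_distrib]
  refine Finset.sum_le_sum fun i _ => ?_
  have hdi : 0 < 1 + d i := by linarith [hd i]
  calc (1 + d i)⁻¹ * w i + d i * w i / (1 + ∑ j, d j)
      ≤ (1 + d i)⁻¹ * w i + d i * w i / (1 + d i) := by
        gcongr
        · exact mul_nonneg (hd i) (hw i)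
        · exact Finset.single_le_sum (fun j _ => hd j) (Finset.mem_univ i)
    _ = w i := by field_simp

lemma le_mul_div_one_add_mul_of_inv_le_div_sub {α s t Δ : K} (hα : 0 < α) (hs : 0 ≤ s)
    (ht : 0 ≤ t) (h : 1 / α ≤ t / Δ - s) : Δ ≤ α * t / (1 + α * s) := by
  have hΔ : 0 < Δ := by
    by_contra! hΔ
    have htΔ : t / Δ ≤ 0 := div_nonpos_of_nonneg_of_nonpos ht hΔ
    have hα' : 0 < 1 / α := by positivity
    linarith
  have h' : Δ * (1 / α + s) ≤ t := (le_div_iff₀' hΔ).1 (by linarith)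
  rw [le_div_iff₀ (by positivity)]
  calc Δ * (1 + α * s) = α * (Δ * (1 / α + s)) := by field_simp
    _ ≤ α * t := by gcongr

end OrderedField

namespace Matrix

variable {ι : Type*} [Fintype ι] [DecidableEq ι]

lemma IsHermitian.trace_cfc_mul {A : Matrix ι ι ℝ} (hA : A.IsHermitian) (f : ℝ → ℝ)
    (K : Matrix ι ι ℝ) :
    (cfc f A * K).trace = ∑ i, f (hA.eigenvalues i) *
      (star (hA.eigenvectorUnitary : Matrix ι ι ℝ) * K * hA.eigenvectorUnitary) i i := by
  rw [hA.cfc_eq, IsHermitian.cfc, Unitary.conjStarAlgAut_apply, Matrix.mul_assoc,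
    Matrix.mul_assoc, trace_mul_comm, Matrix.mul_assoc]
  simp [trace, diagonal_mul, Matrix.mul_assoc]

lemma IsHermitian.trace_cfc {A : Matrix ι ι ℝ} (hA : A.IsHermitian) (f : ℝ → ℝ) :
    (cfc f A).trace = ∑ i, f (hA.eigenvalues i) := by
  simpa using hA.trace_cfc_mul f 1

lemma PosDef.trace_inv {M : Matrix ι ι ℝ} (hM : M.PosDef) :
    M⁻¹.trace = ∑ i, (hM.isHermitian.eigenvalues i)⁻¹ := by
  rw [← hM.isHermitian.trace_cfc, cfc_ringInverse_id _ hM.isUnit, nonsing_inv_eq_ringInverse]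

lemma IsHermitian.posDef_sub_smul_one_of_lt_eigenvalues {M : Matrix ι ι ℝ} (hM : M.IsHermitian)
    {δ : ℝ} (h : ∀ i, δ < hM.eigenvalues i) : (M - δ • 1).PosDef := by
  have hcfc : M - δ • 1 = cfc (fun x : ℝ => x - δ) M := by
    rw [cfc_sub (fun x => x) (fun _ => δ) M, cfc_id' ℝ M, cfc_const δ M,
      Algebra.algebraMap_eq_smul_one]
  rw [hcfc, ← isStrictlyPositive_iff_posDef, cfc_isStrictlyPositive_iff (fun x => x - δ) M,
    hM.spectrum_real_eq_range_eigenvalues]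
  rintro - ⟨i, rfl⟩
  exact sub_pos.2 (h i)

lemma PosDef.posDef_sub_smul_one_of_trace_inv_le [Nontrivial ι] {M : Matrix ι ι ℝ}
    (hM : M.PosDef) {δ : ℝ} (hδ : 0 < δ) (h : M⁻¹.trace ≤ δ⁻¹) : (M - δ • 1).PosDef :=
  hM.isHermitian.posDef_sub_smul_one_of_lt_eigenvalues <|
    lt_of_sum_inv_le_inv hM.eigenvalues_pos hδ (hM.trace_inv ▸ h)

open scoped ComplexOrder in
lemma PosSemidef.trace_mul_nonneg_s12 {𝕜 : Type*} [RCLike 𝕜] {A B : Matrix ι ι 𝕜}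
    (hA : A.PosSemidef) (hB : B.PosSemidef) : 0 ≤ (A * B).trace := by
  obtain ⟨C, rfl⟩ := CStarAlgebra.nonneg_iff_eq_star_mul_self.mp hA.nonneg
  rw [star_eq_conjTranspose, Matrix.mul_assoc, trace_mul_comm]
  exact (hB.mul_mul_conjTranspose_same C).trace_nonneg

lemma PosSemidef.inv_one_add_eq_cfc {Y : Matrix ι ι ℝ} (hY : Y.PosSemidef) :
    (1 + Y)⁻¹ = cfc (fun x : ℝ => (1 + x)⁻¹) Y := by
  have hne : ∀ x ∈ spectrum ℝ Y, 1 + x ≠ 0 := fun x hx => by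
    have := spectrum_nonneg_of_nonneg (𝕜 := ℝ) hY.nonneg hx
    positivity
  rw [cfc_inv (fun x : ℝ => 1 + x) Y hne, cfc_const_add 1 (fun x => x) Y, cfc_id' ℝ Y,
    map_one, nonsing_inv_eq_ringInverse]

lemma PosSemidef.trace_inv_one_add_mul_le {Y K : Matrix ι ι ℝ} (hY : Y.PosSemidef)
    (hK : K.PosSemidef) :
    ((1 + Y)⁻¹ * K).trace ≤ K.trace - (Y * K).trace / (1 + Y.trace) := by
  have hK1 := hY.isHermitian.trace_cfc_mul 1 K
  have hYK := hY.isHermitian.trace_cfc_mul id K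
  have hY1 := hY.isHermitian.trace_cfc id
  rw [cfc_one ℝ Y, one_mul] at hK1
  rw [cfc_id ℝ Y] at hYK hY1
  rw [hY.inv_one_add_eq_cfc, hY.isHermitian.trace_cfc_mul, hK1, hYK, hY1]
  simp only [Pi.one_apply, one_mul, id]
  exact sum_inv_one_add_mul_le hY.eigenvalues_nonneg fun i =>
    (hK.conjTranspose_mul_mul_same (hY.isHermitian.eigenvectorUnitary : Matrix ι ι ℝ)).diag_nonneg

lemma PosDef.trace_inv_add_le {B X : Matrix ι ι ℝ} (hB : B.PosDef) (hX : X.PosSemidef) :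
    (B + X)⁻¹.trace ≤ B⁻¹.trace - (B⁻¹ * B⁻¹ * X).trace / (1 + (B⁻¹ * X).trace) := by
  set S := CFC.sqrt B
  have hSS : S * S = B := CFC.sqrt_mul_sqrt_self B hB.posSemidef.nonneg
  have hS : IsUnit S := (CFC.isUnit_sqrt_iff B hB.posSemidef.nonneg).2 hB.isUnit
  set P := S⁻¹
  set Y := P * X * P
  have hP : Pᴴ = P := by
    rw [conjTranspose_nonsing_inv, (CFC.sqrt_nonneg B).posSemidef.isHermitian.eq]
  have hY : Y.PosSemidef := by simpa only [hP] using hX.conjTranspose_mul_mul_same P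
  have hBinv : B⁻¹ = P * P := by rw [← hSS, Matrix.mul_inv_rev]
  have hSdet := (isUnit_iff_isUnit_det S).1 hS
  have hSum : B + X = S * (1 + Y) * S := by
    simp only [Y, P, Matrix.mul_add, Matrix.add_mul, Matrix.mul_one, hSS, ← Matrix.mul_assoc,
      mul_nonsing_inv S hSdet, Matrix.one_mul]
    simp only [Matrix.mul_assoc, nonsing_inv_mul S hSdet, Matrix.mul_one]
  have htr_inv : (B + X)⁻¹.trace = ((1 + Y)⁻¹ * B⁻¹).trace := by
    rw [hSum, Matrix.mul_inv_rev, Matrix.mul_inv_rev, hBinv, trace_mul_comm, Matrix.mul_assoc]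
  have htr_X : (B⁻¹ * X).trace = Y.trace := by
    rw [hBinv, Matrix.mul_assoc, trace_mul_comm]
  have htr_X2 : (B⁻¹ * B⁻¹ * X).trace = (Y * B⁻¹).trace := by
    rw [trace_mul_comm, show Y * B⁻¹ = P * (X * P * B⁻¹) by simp only [Y, Matrix.mul_assoc],
      trace_mul_comm P]
    simp only [hBinv, Matrix.mul_assoc]
  rw [htr_inv, htr_X, htr_X2]
  exact hY.trace_inv_one_add_mul_le hB.inv.posSemidef

end Matrix

theorem bss_lower_barrier_shift_general {n : ℕ} (hn : 2 ≤ n)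
    (A X : Matrix (Fin n) (Fin n) ℝ) (hX : X.PosSemidef)
    (ℓ δL : ℝ) (hδL : 0 < δL)
    (hl : (A - ℓ • (1 : Matrix (Fin n) (Fin n) ℝ)).PosDef)
    (hpot : lowerPot ℓ A ≤ 1 / δL)
    (N : Matrix (Fin n) (Fin n) ℝ)
    (hN : N = A - (ℓ + δL) • (1 : Matrix (Fin n) (Fin n) ℝ))
    (α : ℝ) (hα : 0 < α)
    (hLA : 1 / α ≤
      (N⁻¹ * N⁻¹ * X).trace / (lowerPot (ℓ + δL) A - lowerPot ℓ A) - (N⁻¹ * X).trace) :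
    N.PosDef ∧
    ((A + α • X) - (ℓ + δL) • (1 : Matrix (Fin n) (Fin n) ℝ)).PosDef ∧
    lowerPot (ℓ + δL) (A + α • X) ≤ lowerPot ℓ A := by
  have : Nontrivial (Fin n) := Fin.nontrivial_iff_two_le.2 hn
  have hNpd : N.PosDef := by
    rw [hN, add_smul, ← sub_sub]
    exact hl.posDef_sub_smul_one_of_trace_inv_le hδL (by rwa [lowerPot, one_div] at hpot)
  have hshift : A + α • X - (ℓ + δL) • 1 = N + α • X := by
    rw [hN]; abel
  have hαX := hX.smul hα.le
  refine ⟨hNpd, hshift ▸ hNpd.add_posSemidef hαX, ?_⟩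
  have hN2 : (N⁻¹ * N⁻¹).PosSemidef := sq N⁻¹ ▸ hNpd.inv.posSemidef.pow 2
  have hΔ := le_mul_div_one_add_mul_of_inv_le_div_sub hα
    (hNpd.inv.posSemidef.trace_mul_nonneg_s12 hX) (hN2.trace_mul_nonneg_s12 hX) hLA
  have hbound := hNpd.trace_inv_add_le hαX
  simp only [Matrix.mul_smul, trace_smul, smul_eq_mul] at hbound
  have hA' : lowerPot (ℓ + δL) A = N⁻¹.trace := by rw [lowerPot, hN]
  have hAX : lowerPot (ℓ + δL) (A + α • X) = (N + α • X)⁻¹.trace := by rw [lowerPot, hshift]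
  linarith

/-- **Analog of BSS Lemma 3.4 for arbitrary-rank updates.** Here the condition
`λ_min(A) > ℓ` is expressed as positive definiteness of `A − ℓ·I`. -/
theorem bss_lower_barrier_shift {n : ℕ} (hn : 2 ≤ n)
    (A X : Matrix (Fin n) (Fin n) ℝ) (hA : A.IsSymm) (hX : X.PosSemidef)
    (ℓ δL : ℝ) (hδL : 0 < δL)
    (hl : (A - ℓ • (1 : Matrix (Fin n) (Fin n) ℝ)).PosDef)
    (hpot : lowerPot ℓ A ≤ 1 / δL)
    (N : Matrix (Fin n) (Fin n) ℝ)
    (hN : N = A - (ℓ + δL) • (1 : Matrix (Fin n) (Fin n) ℝ))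
    (α : ℝ) (hα : 0 < α)
    (hLA : 1 / α ≤
      (N⁻¹ * N⁻¹ * X).trace / (lowerPot (ℓ + δL) A - lowerPot ℓ A) - (N⁻¹ * X).trace) :
    N.PosDef ∧
    ((A + α • X) - (ℓ + δL) • (1 : Matrix (Fin n) (Fin n) ℝ)).PosDef ∧
    lowerPot (ℓ + δL) (A + α • X) ≤ lowerPot ℓ A :=
  bss_lower_barrier_shift_general hn A X hX ℓ δL hδL hl hpot N hN α hα hLA
end

section
/- There exists η_0 ∈ (0,1) such that for every η ∈ (0,η_0) and every positive integer k, setting n := 3k and ζ := 3η, the following holds. There are rank-one symmetric positive semidefinite n×n matrices B_{i,j} = v_{i,j} v_{i,j}^T for i ∈ {1,2,3}, j ∈ {1,...,k}, with Σ_{i,j} B_{i,j} = I, and symmetric positive definite n×n matrices X_1 = Diag(1, ζ³, ζ) ⊗ I_k and X_2 = Diag(1, 1/ζ³, 1/ζ) ⊗ I_k (so that X_1 is a scalar multiple of X_2^{−1}), where v_{1,j} = [1/√2, −1/√2, 0] ⊗ e_j, v_{2,j} = [1/√2, 1/√2, 0] ⊗ e_j, v_{3,j} = [0, 0, 1] ⊗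 e_j, such that every pair (i,j) and α ≥ 0 satisfying α·⟨X_1, B_{i,j}⟩ ≥ (1−η)·tr(X_1) and α·⟨X_2, B_{i,j}⟩ ≤ (1+η)·tr(X_2) must also satisfy α·tr(B_{i,j}) ≥ (1−η)·n/(9η). In particular, any oracle satisfying these two inequalities together with α·tr(B_{i,j}) ≤ ρ requires ρ = Ω(n/η). -/
open Finset

/-- The base vectors `[1/√2, −1/√2, 0]`, `[1/√2, 1/√2, 0]`, `[0, 0, 1]`. -/
noncomputable def lbBase : Fin 3 → Fin 3 → ℝ :=
  ![![1 / Real.sqrt 2, -(1 / Real.sqrt 2), 0],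
    ![1 / Real.sqrt 2, 1 / Real.sqrt 2, 0],
    ![0, 0, 1]]

/-- The vector `v_{i,j} = lbBase i ⊗ e_j ∈ ℝ^{3k}` (indexed by `Fin 3 × Fin k`). -/
noncomputable def lbVec (k : ℕ) (i : Fin 3) (j : Fin k) : Fin 3 × Fin k → ℝ :=
  fun p => if p.2 = j then lbBase i p.1 else 0

/-- The rank-one matrix `B_{i,j} = v_{i,j} v_{i,j}ᵀ`. -/
noncomputable def lbB (k : ℕ) (i : Fin 3) (j : Fin k) :
    Matrix (Fin 3 × Fin k) (Fin 3 × Fin k) ℝ :=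
  Matrix.vecMulVec (lbVec k i j) (lbVec k i j)

/-- The diagonal matrix `Diag(1, ζ³, ζ) ⊗ I_k`. -/
noncomputable def lbX (k : ℕ) (ζ : ℝ) : Matrix (Fin 3 × Fin k) (Fin 3 × Fin k) ℝ :=
  Matrix.diagonal fun p => ![1, ζ ^ 3, ζ] p.1

/-! On `B_{1,j}` and `B_{2,j}` the two test matrices differ by exactly the factor `ζ³`:
`⟨X₂, B⟩ = ζ⁻³ ⟨X₁, B⟩`. The two oracle inequalities then force
`(1 - η) tr X₁ ≤ (1 + η) ζ³ tr X₂`, i.e. `(1 - η)(1 + ζ + ζ³) ≤ (1 + η)(1 + ζ² + ζ³)`, which fails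
for small `η`: with `ζ = 3η` the left side gains a factor `≈ 1 + 3η` against `≈ 1 + 2η` on the right.
So the oracle can only return some `B_{3,j}`, where `⟨X₁, B⟩ = ζ` and the first inequality gives
`α ≥ (1 - η) tr X₁ / ζ ≥ (1 - η) k / (3η)`. -/

open Matrix

theorem Matrix.trace_diagonal_mul_vecMulVec_self {n R : Type*} [Fintype n] [DecidableEq n]
    [CommSemiring R] (d w : n → R) :
    (diagonal d * vecMulVec w w).trace = ∑ p, d p * w p ^ 2 := by
  simp [trace, vecMulVec_apply, sq]

lemma sum_lbBase_mul_lbBase (a b : Fin 3) :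
    ∑ i, lbBase i a * lbBase i b = if a = b then 1 else 0 := by
  fin_cases a <;> fin_cases b <;> simp [lbBase, Fin.sum_univ_three, ← mul_inv] <;> norm_num

section
variable (k : ℕ)

lemma sum_lbB_eq_one : ∑ i, ∑ j, lbB k i j = 1 := by
  ext ⟨a, b⟩ ⟨c, d⟩
  simp only [Matrix.sum_apply, lbB, vecMulVec_apply, lbVec, one_apply, Prod.mk.injEq]
  rw [Finset.sum_comm]
  by_cases hbd : b = d
  · subst hbd
    simp [sum_lbBase_mul_lbBase]
  · simp [hbd]

lemma trace_diagonal_fst (d : Fin 3 → ℝ) :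
    (diagonal fun p : Fin 3 × Fin k => d p.1).trace = k * ∑ a, d a := by
  simp [trace, Fintype.sum_prod_type_right]

lemma trace_diagonal_fst_mul_lbB (d : Fin 3 → ℝ) (i : Fin 3) (j : Fin k) :
    ((diagonal fun p : Fin 3 × Fin k => d p.1) * lbB k i j).trace
      = ![(d 0 + d 1) / 2, (d 0 + d 1) / 2, d 2] i := by
  have hs : Real.sqrt 2 ^ 2 = 2 := Real.sq_sqrt (by norm_num)
  rw [lbB, trace_diagonal_mul_vecMulVec_self, Fintype.sum_prod_type_right]
  fin_cases i <;> simp [lbVec, lbBase, Fin.sum_univ_three, hs] <;> ring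

lemma trace_lbB (i : Fin 3) (j : Fin k) : (lbB k i j).trace = 1 := by
  rw [← one_mul (lbB k i j), ← diagonal_one]
  have := trace_diagonal_fst_mul_lbB k 1 i j
  fin_cases i <;> simpa using this

lemma trace_lbX (ζ : ℝ) : (lbX k ζ).trace = k * (1 + ζ ^ 3 + ζ) := by
  rw [lbX, trace_diagonal_fst]
  simp [Fin.sum_univ_three]

lemma trace_lbX_mul_lbB (ζ : ℝ) (i : Fin 3) (j : Fin k) :
    (lbX k ζ * lbB k i j).trace = ![(1 + ζ ^ 3) / 2, (1 + ζ ^ 3) / 2, ζ] i := by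
  simp [lbX, trace_diagonal_fst_mul_lbB]

lemma lbX_posDef {ζ : ℝ} (hζ : 0 < ζ) : (lbX k ζ).PosDef := by
  rw [lbX, posDef_diagonal_iff]
  rintro ⟨a, b⟩
  fin_cases a <;> simp [hζ]

lemma lbX_inv {ζ : ℝ} (hζ : ζ ≠ 0) : (lbX k ζ)⁻¹ = lbX k ζ⁻¹ := by
  refine inv_eq_right_inv ?_
  rw [lbX, lbX, diagonal_mul_diagonal, ← diagonal_one]
  congr 1
  ext ⟨a, b⟩
  fin_cases a <;> simp [hζ]

end

lemma le_of_oracle_bounds {ζ η α c : ℝ} (hζ : 0 < ζ) (hc : 0 < c)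
    (h₁ : (1 - η) * (c * (1 + ζ ^ 3 + ζ)) ≤ α * ((1 + ζ ^ 3) / 2))
    (h₂ : α * ((1 + ζ⁻¹ ^ 3) / 2) ≤ (1 + η) * (c * (1 + ζ⁻¹ ^ 3 + ζ⁻¹))) :
    (1 - η) * (1 + ζ ^ 3 + ζ) ≤ (1 + η) * (1 + ζ ^ 3 + ζ ^ 2) := by
  have h₂' : α * ((1 + ζ ^ 3) / 2) ≤ (1 + η) * (c * (1 + ζ ^ 3 + ζ ^ 2)) := by
    field_simp at h₂
    linarith
  exact le_of_mul_le_mul_left (by linarith) hc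

lemma oracle_gap {η : ℝ} (hη : 0 < η) (hη' : η < 1 / 20) :
    (1 + η) * (1 + (3 * η) ^ 3 + (3 * η) ^ 2) < (1 - η) * (1 + (3 * η) ^ 3 + 3 * η) := by
  nlinarith [mul_pos hη hη, mul_pos (mul_pos hη hη) hη]

lemma width_le_of_oracle_lower {η α c : ℝ} (hη : 0 < η) (hη' : η < 1) (hc : 0 ≤ c)
    (h : (1 - η) * (c * (1 + (3 * η) ^ 3 + 3 * η)) ≤ α * (3 * η)) :
    (1 - η) * (3 * c) / (9 * η) ≤ α := by
  rw [div_le_iff₀ (by positivity)]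
  have hX : 0 ≤ (1 - η) * c * ((3 * η) ^ 3 + 3 * η) :=
    mul_nonneg (mul_nonneg (sub_nonneg.2 hη'.le) hc) (by positivity)
  nlinarith

/-- **Optimality of the MMWUM oracle (Proposition on oracle width).**
For all sufficiently small `η > 0` and every `k ≥ 1` (with `n := 3k`,
`ζ := 3η`), the rank-one PSD matrices `B_{i,j} = v_{i,j}v_{i,j}ᵀ` sum to the
identity, `X₁ = Diag(1,ζ³,ζ) ⊗ I_k` and `X₂ = Diag(1,1/ζ³,1/ζ) ⊗ I_k` are
positive definite with `X₁` a scalar multiple of `X₂⁻¹`, and any `(i,j)` and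
`α ≥ 0` satisfying the first two oracle inequalities must have
`α·tr(B_{i,j}) ≥ (1−η)·n/(9η)`; hence any width bound `ρ` is `Ω(n/η)`. -/
theorem mmwum_oracle_lower_bound :
    ∃ η₀ : ℝ, η₀ ∈ Set.Ioo (0 : ℝ) 1 ∧
      ∀ η : ℝ, η ∈ Set.Ioo 0 η₀ → ∀ k : ℕ, 0 < k →
        (∑ i : Fin 3, ∑ j : Fin k, lbB k i j) = 1 ∧
        (lbX k (3 * η)).PosDef ∧
        (lbX k (3 * η)⁻¹).PosDef ∧
        (∃ c : ℝ, lbX k (3 * η) = c • (lbX k (3 * η)⁻¹)⁻¹) ∧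
        ∀ (i : Fin 3) (j : Fin k) (α : ℝ), 0 ≤ α →
          (1 - η) * (lbX k (3 * η)).trace ≤ α * (lbX k (3 * η) * lbB k i j).trace →
          α * (lbX k (3 * η)⁻¹ * lbB k i j).trace ≤ (1 + η) * (lbX k (3 * η)⁻¹).trace →
          (1 - η) * (3 * k : ℝ) / (9 * η) ≤ α * (lbB k i j).trace := by
  refine ⟨1 / 20, by norm_num, fun η ⟨hη, hη'⟩ k hk => ?_⟩
  have hζ : 0 < 3 * η := by positivity
  have hk' : (0 : ℝ) < k := by exact_mod_cast hk
  -- `lbX k (3 * η)⁻¹` is `lbX k ((3 * η)⁻¹)`;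
  -- the matrix inverse only occurs as `(lbX k (3 * η)⁻¹)⁻¹`.
  refine ⟨sum_lbB_eq_one k, lbX_posDef k hζ, lbX_posDef k (inv_pos.2 hζ),
    ⟨1, by rw [one_smul, lbX_inv k (inv_ne_zero hζ.ne'), inv_inv]⟩, fun i j α _ h₁ h₂ => ?_⟩
  rw [trace_lbX, trace_lbX_mul_lbB] at h₁ h₂
  rw [trace_lbB, mul_one]
  fin_cases i
  · exact absurd (le_of_oracle_bounds hζ hk' h₁ h₂) (oracle_gap hη (by linarith)).not_ge
  · exact absurd (le_of_oracle_bounds hζ hk' h₁ h₂) (oracle_gap hη (by linarith)).not_ge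
  · exact width_le_of_oracle_lower hη (by linarith) hk'.le h₁
end

section
/- Let B_1, ..., B_m be nonzero symmetric positive semidefinite n×n real matrices with Σ_{i=1}^m B_i = I. Let γ > 0 and let δ_U, δ_L > 0 satisfy 1/δ_L − n ≥ 1/δ_U. Then for any symmetric positive definite n×n matrices X_L and X_U each with trace one, there exist j ∈ {1,...,m} and α ≥ 0 such that δ_U ≥ ((exp(γ·α·tr B_j) − 1)/tr B_j)·⟨X_U, B_j⟩ and δ_L ≤ ((1 − exp(−γ·α·tr B_j))/tr B_j)·⟨X_L, B_j⟩. -/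
/-!
Put `tᵢ = tr Bᵢ`, `aᵢ = ⟨X_U, Bᵢ⟩` and `bᵢ = ⟨X_L, Bᵢ⟩`. Then `tᵢ, aᵢ > 0`, and since `∑ Bᵢ = I`
the three families sum to `n`, `1` and `1`. Hence `∑ (bᵢ / δ_L - aᵢ / δ_U - tᵢ) = 1 / δ_L - 1 / δ_U - n ≥ 0`,
so some index `j` satisfies `t_j ≤ b_j / δ_L - a_j / δ_U`. For that index choose `α` with
`exp (γ α t_j) = b_j / (b_j - δ_L t_j)`: the lower bound then holds with equality, and the upper
bound reduces to `δ_L a_j ≤ δ_U (b_j - δ_L t_j)`, which is the inequality defining `j`.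
-/

open Finset

open scoped ComplexOrder MatrixOrder in
theorem Matrix.PosDef.trace_mul_pos_s18 {𝕜 ι : Type*} [RCLike 𝕜] [Fintype ι] {X B : Matrix ι ι 𝕜}
    (hX : X.PosDef) (hB : B.PosSemidef) (hB0 : B ≠ 0) : 0 < (X * B).trace := by
  classical
  obtain ⟨Y, hY, rfl⟩ := CStarAlgebra.isStrictlyPositive_iff_eq_star_mul_self.mp
    hX.isStrictlyPositive
  rw [star_eq_conjTranspose, mul_assoc, trace_mul_comm]
  have hYBY := hB.mul_mul_conjTranspose_same Y
  refine hYBY.trace_nonneg.lt_of_ne' ?_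
  rw [Ne, hYBY.trace_eq_zero_iff, mul_assoc, hY.mul_right_eq_zero, ← star_eq_conjTranspose,
    hY.star.mul_left_eq_zero]
  exact hB0

theorem Matrix.sum_trace_mul_eq_trace {R ι κ : Type*} [Semiring R] [Fintype ι] [DecidableEq ι]
    [Fintype κ] (X : Matrix ι ι R) {B : κ → Matrix ι ι R} (hB : ∑ k, B k = 1) :
    ∑ k, (X * B k).trace = X.trace := by
  rw [← trace_sum, ← mul_sum, hB, mul_one]

lemma exists_exp_step_bounds_of_le_div_sub_div {γ t a b δU δL : ℝ} (hγ : 0 < γ) (ht : 0 < t)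
    (ha : 0 < a) (hδU : 0 < δU) (hδL : 0 < δL) (h : t ≤ b / δL - a / δU) :
    ∃ α : ℝ, 0 ≤ α ∧
      δU ≥ (Real.exp (γ * α * t) - 1) / t * a ∧
      δL ≤ (1 - Real.exp (-(γ * α * t))) / t * b := by
  have hgap : δL * a ≤ δU * (b - δL * t) := by
    rw [div_sub_div _ _ hδL.ne' hδU.ne', le_div_iff₀ (by positivity)] at h
    linarith
  have hpos : 0 < b - δL * t := pos_of_mul_pos_right (hgap.trans_lt' (by positivity)) hδU.le
  have hb : 0 < b := by nlinarith
  set r := b / (b - δL * t) with hr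
  have hr1 : 1 ≤ r := by rw [hr, one_le_div hpos]; nlinarith
  refine ⟨Real.log r / (γ * t), div_nonneg (Real.log_nonneg hr1) (by positivity), ?_, ?_⟩ <;>
    rw [show γ * (Real.log r / (γ * t)) * t = Real.log r by field_simp]
  · have hstep : (r - 1) / t * a = δL * a / (b - δL * t) := by
      rw [hr]
      field_simp
      ring
    rw [Real.exp_log (by positivity), ge_iff_le, hstep, div_le_iff₀ hpos]
    linarith
  · rw [Real.exp_neg, Real.exp_log (by positivity), hr, inv_div]
    refine le_of_eq ?_
    field_simp
    ring

theorem width_free_mmwum_oracle_general (n m : ℕ)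
    (B : Fin m → Matrix (Fin n) (Fin n) ℝ)
    (hB : ∀ i, (B i).PosSemidef) (hB0 : ∀ i, B i ≠ 0)
    (hsum : ∑ i, B i = 1)
    (γ : ℝ) (hγ : 0 < γ)
    (δU δL : ℝ) (hδU : 0 < δU) (hδL : 0 < δL)
    (hδ : 1 / δL - n ≥ 1 / δU)
    (XL XU : Matrix (Fin n) (Fin n) ℝ)
    (hXU : XU.PosDef)
    (hXLtr : XL.trace = 1) (hXUtr : XU.trace = 1) :
    ∃ (j : Fin m) (α : ℝ), 0 ≤ α ∧
      δU ≥ (Real.exp (γ * α * (B j).trace) - 1) / (B j).trace * (XU * B j).trace ∧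
      δL ≤ (1 - Real.exp (-(γ * α * (B j).trace))) / (B j).trace * (XL * B j).trace := by
  have htr_pos (j : Fin m) : 0 < (B j).trace := by
    simpa using Matrix.PosDef.one.trace_mul_pos_s18 (hB j) (hB0 j)
  have hsum_tr : ∑ j, (B j).trace = n := by
    simpa using Matrix.sum_trace_mul_eq_trace 1 hsum
  have hsum_U : ∑ j, (XU * B j).trace = 1 := (Matrix.sum_trace_mul_eq_trace XU hsum).trans hXUtr
  have hsum_L : ∑ j, (XL * B j).trace = 1 := (Matrix.sum_trace_mul_eq_trace XL hsum).trans hXLtr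
  have hm : (univ : Finset (Fin m)).Nonempty :=
    nonempty_of_sum_ne_zero (hsum_L.trans_ne one_ne_zero)
  obtain ⟨j, -, hj⟩ : ∃ j ∈ univ, (B j).trace ≤ (XL * B j).trace / δL - (XU * B j).trace / δU := by
    refine exists_le_of_sum_le hm ?_
    rw [sum_sub_distrib, ← sum_div, ← sum_div, hsum_tr, hsum_U, hsum_L]
    linarith
  exact ⟨j, exists_exp_step_bounds_of_le_div_sub_div hγ (htr_pos j)
    (hXU.trace_mul_pos_s18 (hB j) (hB0 j)) hδU hδL hj⟩

/-- **The oracle for the width-free MMWUM (Theorem 7).** -/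
theorem width_free_mmwum_oracle (n m : ℕ)
    (B : Fin m → Matrix (Fin n) (Fin n) ℝ)
    (hB : ∀ i, (B i).PosSemidef) (hB0 : ∀ i, B i ≠ 0)
    (hsum : ∑ i, B i = 1)
    (γ : ℝ) (hγ : 0 < γ)
    (δU δL : ℝ) (hδU : 0 < δU) (hδL : 0 < δL)
    (hδ : 1 / δL - n ≥ 1 / δU)
    (XL XU : Matrix (Fin n) (Fin n) ℝ)
    (hXL : XL.PosDef) (hXU : XU.PosDef)
    (hXLtr : XL.trace = 1) (hXUtr : XU.trace = 1) :
    ∃ (j : Fin m) (α : ℝ), 0 ≤ α ∧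
      δU ≥ (Real.exp (γ * α * (B j).trace) - 1) / (B j).trace * (XU * B j).trace ∧
      δL ≤ (1 - Real.exp (-(γ * α * (B j).trace))) / (B j).trace * (XL * B j).trace :=
  width_free_mmwum_oracle_general n m B hB hB0 hsum γ hγ δU δL hδU hδL hδ XL XU hXU hXLtr hXUtr
end
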